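/- arXiv:math/0111200 — 6 statements merged into one kernel-verified Lean document; each statement's English description precedes it below -/
import Mathlib

section
/- Consider the autonomous planar system (log R̃^2)' = -f cos(φ), φ' = δ + f sin(φ), with constants f > 0 and 0 < δ < f, initial conditions φ(0) = 0 and R̃(0) = 1. Let x_π be the first point with φ(x_π) = π (assuming it exists and φ is strictly increasing up to x_π). Then the system has the symmetry: for all x ∈ [0, x_π], φ(x) = π - φ(x_π - x) and R̃(x)^2 = R̃(x_π - x)^2. -/
open Real Set

/-- Reflection symmetry of the idealized Prüfer system
`(log R̃²)' = -f cos φ`, `φ' = δ + f sin φ` about the midpoint of `[0, x_π]`. -/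
theorem prufer_system_reflection_symmetry
    (f δ xπ : ℝ) (φ R : ℝ → ℝ)
    (hδ : 0 < δ) (hδf : δ < f) (hxπ : 0 < xπ)
    (hφ : ∀ x ∈ Icc (0 : ℝ) xπ, HasDerivAt φ (δ + f * Real.sin (φ x)) x)
    (hR : ∀ x ∈ Icc (0 : ℝ) xπ,
      HasDerivAt (fun y => Real.log (R y ^ 2)) (-f * Real.cos (φ x)) x)
    (hRpos : ∀ x ∈ Icc (0 : ℝ) xπ, 0 < R x)
    (hφ0 : φ 0 = 0) (hR0 : R 0 = 1)
    (hmono : StrictMonoOn φ (Icc 0 xπ))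
    (hφπ : φ xπ = Real.pi) :
    ∀ x ∈ Icc (0 : ℝ) xπ,
      φ x = Real.pi - φ (xπ - x) ∧ R x ^ 2 = R (xπ - x) ^ 2 := by
  -- the reflected point map
  have hmem : ∀ x ∈ Icc (0 : ℝ) xπ, xπ - x ∈ Icc (0 : ℝ) xπ := by
    intro x hx
    exact ⟨by linarith [hx.2], by linarith [hx.1]⟩
  set ψ : ℝ → ℝ := fun x => Real.pi - φ (xπ - x) with hψdef
  -- ψ satisfies the same ODE
  have hψ : ∀ x ∈ Icc (0 : ℝ) xπ, HasDerivAt ψ (δ + f * Real.sin (ψ x)) x := by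
    intro x hx
    have h1 : HasDerivAt (fun y : ℝ => xπ - y) (-1) x := by
      simpa using (hasDerivAt_id' x).const_sub xπ
    have h2 := (hφ (xπ - x) (hmem x hx)).comp x h1
    have h3 : HasDerivAt ψ (δ + f * Real.sin (φ (xπ - x))) x := by
      have : HasDerivAt (fun y => Real.pi - (φ ∘ fun y => xπ - y) y)
          (0 - (δ + f * Real.sin (φ (xπ - x))) * -1) x := (hasDerivAt_const x Real.pi).sub h2
      convert this using 1
      · rfl
      · ring
    have : Real.sin (φ (xπ - x)) = Real.sin (ψ x) := by
      simp [hψdef, Real.sin_pi_sub]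
    rwa [this] at h3
  -- Lipschitz vector field
  have hv : ∀ t : ℝ, LipschitzOnWith (Real.nnabs f) (fun y => δ + f * Real.sin y)
      (univ : Set ℝ) := by
    intro t
    apply LipschitzWith.lipschitzOnWith
    apply LipschitzWith.of_dist_le_mul
    intro a b
    have hsin : |Real.sin a - Real.sin b| ≤ |a - b| := by
      rw [Real.sin_sub_sin]
      calc |2 * Real.sin ((a - b) / 2) * Real.cos ((a + b) / 2)|
          = 2 * |Real.sin ((a - b) / 2)| * |Real.cos ((a + b) / 2)| := by
            rw [abs_mul, abs_mul]; simp
        _ ≤ 2 * |(a - b) / 2| * 1 := by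
            apply mul_le_mul (mul_le_mul_of_nonneg_left (Real.abs_sin_le_abs) (by norm_num))
              (Real.abs_cos_le_one _) (abs_nonneg _)
            positivity
        _ = |a - b| := by rw [abs_div]; simp; ring
    have : dist (δ + f * Real.sin a) (δ + f * Real.sin b)
        = |f| * |Real.sin a - Real.sin b| := by
      rw [Real.dist_eq, ← abs_mul]; ring_nf
    rw [this]
    calc |f| * |Real.sin a - Real.sin b| ≤ |f| * |a - b| :=
          mul_le_mul_of_nonneg_left hsin (abs_nonneg f)
      _ = (Real.nnabs f : ℝ) * dist a b := by rw [Real.dist_eq]; simp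
  -- continuity of φ and ψ on the interval
  have hφcont : ContinuousOn φ (Icc 0 xπ) := fun x hx => (hφ x hx).continuousAt.continuousWithinAt
  have hψcont : ContinuousOn ψ (Icc 0 xπ) := fun x hx => (hψ x hx).continuousAt.continuousWithinAt
  -- φ symmetry by uniqueness
  have hφsym : EqOn φ ψ (Icc 0 xπ) := by
    apply ODE_solution_unique_of_mem_Icc_right (fun t _ => hv t) hφcont
      (fun t ht => (hφ t (Ico_subset_Icc_self ht)).hasDerivWithinAt)
      (fun t _ => mem_univ _) hψcont
      (fun t ht => (hψ t (Ico_subset_Icc_self ht)).hasDerivWithinAt)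
      (fun t _ => mem_univ _)
    simp [hψdef, hφ0, hφπ]
  -- R part: show g x - g (xπ - x) is constant, where g y = log (R y ^ 2)
  set g : ℝ → ℝ := fun y => Real.log (R y ^ 2) with hgdef
  set F : ℝ → ℝ := fun x => g x - g (xπ - x) with hFdef
  have hFderiv : ∀ x ∈ Ico (0 : ℝ) xπ, HasDerivWithinAt F 0 (Ici x) x := by
    intro x hx
    have hx' : x ∈ Icc (0 : ℝ) xπ := Ico_subset_Icc_self hx
    have h1 : HasDerivAt (fun y : ℝ => xπ - y) (-1) x := by
      simpa using (hasDerivAt_id' x).const_sub xπ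
    have h2 := (hR (xπ - x) (hmem x hx')).comp x h1
    have h3 : HasDerivAt F (-f * Real.cos (φ x) - (-f * Real.cos (φ (xπ - x))) * (-1)) x :=
      (hR x hx').sub h2
    have hcos : Real.cos (φ (xπ - x)) = -Real.cos (φ x) := by
      have := hφsym hx'
      rw [this]
      simp [hψdef, Real.cos_pi_sub]
    have : (-f * Real.cos (φ x) - (-f * Real.cos (φ (xπ - x))) * (-1)) = 0 := by
      rw [hcos]; ring
    rw [this] at h3
    exact h3.hasDerivWithinAt
  have hFcont : ContinuousOn F (Icc 0 xπ) := by
    intro x hx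
    exact (((hR x hx).continuousAt).continuousWithinAt).sub
      (((hR (xπ - x) (hmem x hx)).continuousAt.comp
        (by continuity : Continuous fun y : ℝ => xπ - y).continuousAt).continuousWithinAt)
  have hFconst : ∀ x ∈ Icc (0 : ℝ) xπ, F x = F 0 :=
    constant_of_has_deriv_right_zero hFcont hFderiv
  -- F 0 = -(F xπ) and both equal the constant, hence F ≡ 0
  have hF0 : F 0 = 0 := by
    have h1 := hFconst xπ ⟨le_of_lt hxπ, le_refl _⟩
    have h2 : F xπ + F 0 = 0 := by simp only [hFdef]; ring_nf
    linarith
  intro x hx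
  refine ⟨hφsym hx, ?_⟩
  have hFx : F x = 0 := by rw [hFconst x hx, hF0]
  have hg : g x = g (xπ - x) := by
    have := hFx
    simp only [hFdef] at this
    linarith
  have hx2 : (0:ℝ) < R x ^ 2 := pow_pos (hRpos x hx) 2
  have hy2 : (0:ℝ) < R (xπ - x) ^ 2 := pow_pos (hRpos _ (hmem x hx)) 2
  have := congrArg Real.exp hg
  rwa [hgdef, Real.exp_log hx2, Real.exp_log hy2] at this
end

section
/- Let 0 < δ < f, and let φ solve φ' = δ + f sin φ with φ(0) = 0. For a small angle γ with 0 < γ < π/2, let x_γ be the first point with φ(x_γ) = γ, and let R solve (log R^2)' = -f cos φ with R(0) = 1. Then e^{-f x_γ} ≤ R(x_γ)^2 ≤ e^{-f x_γ cos γ}, and γ ≤ (δ/f)(e^{f x_γ} - 1). -/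
open Real Set

/-- Auxiliary: a solution of `φ' = δ + f sin φ` with `φ 0 = 0` and `δ > 0`
stays nonnegative for nonnegative times. -/
theorem small_angle_aux_nonneg
    (f δ : ℝ) (φ : ℝ → ℝ)
    (hδ : 0 < δ)
    (hφ : ∀ x, HasDerivAt φ (δ + f * Real.sin (φ x)) x)
    (hφ0 : φ 0 = 0) :
    ∀ y, 0 ≤ y → 0 ≤ φ y := by
  intro y hy
  by_contra hneg
  push_neg at hneg
  have hcont : Continuous φ := continuous_iff_continuousAt.2 fun x => (hφ x).continuousAt
  -- last zero of φ before y
  set A : Set ℝ := {t ∈ Icc (0 : ℝ) y | φ t = 0} with hA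
  have hA0 : (0 : ℝ) ∈ A := ⟨⟨le_refl 0, hy⟩, hφ0⟩
  have hAne : A.Nonempty := ⟨0, hA0⟩
  have hAbdd : BddAbove A := ⟨y, fun t ht => ht.1.2⟩
  have hAclosed : IsClosed A :=
    ((isClosed_Icc).inter (isClosed_eq hcont continuous_const) : IsClosed (Icc 0 y ∩ {t | φ t = 0}))
  set s := sSup A with hs
  have hsA : s ∈ A := hAclosed.csSup_mem hAne hAbdd
  have hφs : φ s = 0 := hsA.2
  have hsy : s ≤ y := hsA.1.2
  have hsylt : s < y := hsy.lt_of_ne (fun h => by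
    rw [h] at hφs; exact absurd hφs (ne_of_lt hneg))
  -- on (s, y], φ is negative
  have hnegOn : ∀ t ∈ Ioc s y, φ t < 0 := by
    intro t ht
    rcases lt_trichotomy (φ t) 0 with h | h | h
    · exact h
    · exact absurd (le_csSup hAbdd ⟨⟨le_trans hsA.1.1 ht.1.le, ht.2⟩, h⟩) (not_le.2 ht.1)
    · -- φ t > 0 > φ y, so by IVT there is a zero in (t, y], contradicting sSup
      have hty : t ≤ y := ht.2
      have : (0 : ℝ) ∈ Icc (φ y) (φ t) := ⟨hneg.le, h.le⟩
      rcases intermediate_value_Icc' hty hcont.continuousOn this with ⟨z, hz, hφz⟩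
      have hzA : z ∈ A := ⟨⟨le_trans (le_trans hsA.1.1 ht.1.le) hz.1, hz.2⟩, hφz⟩
      have : z ≤ s := le_csSup hAbdd hzA
      exact absurd (lt_of_lt_of_le ht.1 hz.1) (not_lt.2 this)
  -- but φ' s = δ > 0, so φ is positive just after s
  have hds : HasDerivAt φ δ s := by
    have := hφ s
    rwa [hφs, Real.sin_zero, mul_zero, add_zero] at this
  have hslope : Filter.Tendsto (slope φ s) (nhdsWithin s {s}ᶜ) (nhds δ) :=
    hasDerivAt_iff_tendsto_slope.1 hds
  have hslope' : Filter.Tendsto (slope φ s) (nhdsWithin s (Ioi s)) (nhds δ) :=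
    hslope.mono_left (nhdsWithin_mono _ (fun t ht => ne_of_gt ht))
  have hev : ∀ᶠ t in nhdsWithin s (Ioi s), 0 < slope φ s t :=
    hslope' (Ioi_mem_nhds hδ)
  have hmem : Ioc s y ∈ nhdsWithin s (Ioi s) := Ioc_mem_nhdsGT hsylt
  rcases (hev.and (Filter.eventually_of_mem hmem (fun t ht => ht))).exists with ⟨t, hslopet, htIoc⟩
  have hts : 0 < t - s := sub_pos.2 htIoc.1
  have : 0 < φ t := by
    have := hslopet
    rw [slope_def_field, div_pos_iff] at this
    rcases this with ⟨h1, _⟩ | ⟨_, h2⟩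
    · rwa [hφs, sub_zero] at h1
    · exact absurd hts (not_lt.2 h2.le)
  exact absurd this (not_lt.2 (hnegOn t htIoc).le)

/-- Small angle estimates: if `x_γ` is the first point where the Prüfer angle
difference `φ` (with `φ' = δ + f sin φ`, `φ(0)=0`) reaches `γ ∈ (0, π/2)`, and
`R` solves `(log R²)' = -f cos φ`, `R(0)=1`, then
`e^{-f x_γ} ≤ R(x_γ)² ≤ e^{-f x_γ cos γ}` and `γ ≤ (δ/f)(e^{f x_γ} - 1)`. -/
theorem small_angle_lemma
    (f δ γ xγ : ℝ) (φ R : ℝ → ℝ)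
    (hδ : 0 < δ) (hδf : δ < f)
    (hγ : 0 < γ) (hγ' : γ < Real.pi / 2)
    (hφ : ∀ x, HasDerivAt φ (δ + f * Real.sin (φ x)) x)
    (hφ0 : φ 0 = 0)
    (hxγ : 0 ≤ xγ) (hfirst : φ xγ = γ)
    (hbefore : ∀ y ∈ Ico (0 : ℝ) xγ, φ y < γ)
    (hR : ∀ x, HasDerivAt (fun y => Real.log (R y ^ 2)) (-f * Real.cos (φ x)) x)
    (hRpos : ∀ x, 0 < R x) (hR0 : R 0 = 1) :
    Real.exp (-f * xγ) ≤ R xγ ^ 2 ∧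
    R xγ ^ 2 ≤ Real.exp (-f * xγ * Real.cos γ) ∧
    γ ≤ (δ / f) * (Real.exp (f * xγ) - 1) := by
  have hf : 0 < f := hδ.trans hδf
  have hcontφ : Continuous φ := continuous_iff_continuousAt.2 fun x => (hφ x).continuousAt
  have hnn : ∀ y, 0 ≤ y → 0 ≤ φ y := small_angle_aux_nonneg f δ φ hδ hφ hφ0
  have hle : ∀ y ∈ Icc (0 : ℝ) xγ, φ y ≤ γ := by
    intro y hy
    rcases lt_or_eq_of_le hy.2 with h | h
    · exact (hbefore y ⟨hy.1, h⟩).le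
    · rw [h, hfirst]
  have hγπ : γ ≤ Real.pi := le_trans hγ'.le (by linarith [Real.pi_pos])
  -- cosine bounds
  have hcos_ub : ∀ y ∈ Icc (0 : ℝ) xγ, Real.cos γ ≤ Real.cos (φ y) := fun y hy =>
    Real.cos_le_cos_of_nonneg_of_le_pi (hnn y hy.1) hγπ (hle y hy)
  -- `g = log R²`
  set g : ℝ → ℝ := fun y => Real.log (R y ^ 2) with hg
  have hg0 : g 0 = 0 := by simp [hg, hR0]
  have hgx : R xγ ^ 2 = Real.exp (g xγ) := by
    rw [Real.exp_log (pow_pos (hRpos xγ) 2)]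
  have hcontg : Continuous g := continuous_iff_continuousAt.2 fun x => (hR x).continuousAt
  -- upper bound: `g y + f cos γ · y` is antitone on `[0, xγ]`
  have hupper : g xγ ≤ -f * xγ * Real.cos γ := by
    set u : ℝ → ℝ := fun y => g y + f * Real.cos γ * y with hu
    have hud : ∀ x, HasDerivAt u (-f * Real.cos (φ x) + f * Real.cos γ) x := fun x =>
      (hR x).add (by simpa using (hasDerivAt_id x).const_mul (f * Real.cos γ))
    have hanti : AntitoneOn u (Icc 0 xγ) := by
      have hcu : Continuous u := by
        rw [hu]; exact hcontg.add (continuous_const.mul continuous_id)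
      apply antitoneOn_of_deriv_nonpos (convex_Icc 0 xγ) hcu.continuousOn
      · exact fun x _ => (hud x).differentiableAt.differentiableWithinAt
      · intro x hx
        rw [interior_Icc] at hx
        rw [(hud x).deriv]
        have h := hcos_ub x ⟨hx.1.le, hx.2.le⟩
        have := mul_le_mul_of_nonneg_left h hf.le
        linarith
    have := hanti (left_mem_Icc.2 hxγ) (right_mem_Icc.2 hxγ) hxγ
    simp only [hu, hg0, zero_add, mul_zero, add_zero] at this
    linarith
  -- lower bound: `g y + f · y` is monotone on `[0, xγ]`
  have hlower : -f * xγ ≤ g xγ := by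
    set v : ℝ → ℝ := fun y => g y + f * y with hv
    have hvd : ∀ x, HasDerivAt v (-f * Real.cos (φ x) + f) x := fun x =>
      (hR x).add (by simpa using (hasDerivAt_id x).const_mul f)
    have hmono : MonotoneOn v (Icc 0 xγ) := by
      have hcv : Continuous v := by
        rw [hv]; exact hcontg.add (continuous_const.mul continuous_id)
      apply monotoneOn_of_deriv_nonneg (convex_Icc 0 xγ) hcv.continuousOn
      · exact fun x _ => (hvd x).differentiableAt.differentiableWithinAt
      · intro x hx
        rw [(hvd x).deriv]
        have h := Real.cos_le_one (φ x)
        have := mul_le_mul_of_nonneg_left h hf.le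
        linarith
    have := hmono (left_mem_Icc.2 hxγ) (right_mem_Icc.2 hxγ) hxγ
    simp only [hv, hg0, zero_add, mul_zero, add_zero] at this
    linarith
  refine ⟨?_, ?_, ?_⟩
  · rw [hgx]; exact Real.exp_le_exp.2 hlower
  · rw [hgx]; exact Real.exp_le_exp.2 hupper
  · -- Grönwall
    have hgr := norm_le_gronwallBound_of_norm_deriv_right_le
      (f := φ) (f' := fun x => δ + f * Real.sin (φ x)) (δ := 0) (K := f) (ε := δ)
      (a := 0) (b := xγ) hcontφ.continuousOn
      (fun x _ => (hφ x).hasDerivWithinAt) (by simp [hφ0]) ?_ xγ (right_mem_Icc.2 hxγ)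
    · rw [gronwallBound_of_K_ne_0 hf.ne'] at hgr
      simp only [Real.norm_eq_abs, hfirst, abs_of_nonneg hγ.le, sub_zero, zero_mul,
        zero_add] at hgr
      exact hgr
    · intro x hx
      have h0 : 0 ≤ φ x := hnn x hx.1
      have h1 : φ x ≤ γ := hle x ⟨hx.1, hx.2.le⟩
      have hsin0 : 0 ≤ Real.sin (φ x) :=
        Real.sin_nonneg_of_nonneg_of_le_pi h0 (h1.trans hγπ)
      have hsin1 : Real.sin (φ x) ≤ φ x := Real.sin_le h0
      show ‖δ + f * Real.sin (φ x)‖ ≤ f * ‖φ x‖ + δ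
      rw [Real.norm_eq_abs, Real.norm_eq_abs, abs_of_nonneg (by positivity),
        abs_of_nonneg h0]
      have := mul_le_mul_of_nonneg_left hsin1 hf.le
      linarith
end

section
/- Let μ be a positive Borel measure on ℝ and suppose μ = μ_ac + μ_pp where μ_ac is absolutely continuous with respect to Lebesgue measure and μ_pp = Σ_{l=1}^∞ ρ_l δ_{x_l} is a countable sum of point masses with Σ ρ_l < ∞. Let B > 0. Suppose for every n there are 2^n pairwise disjoint intervals J_1^{(n)},…,J_{2^n}^{(n)}, each of Lebesgue length at most C e^{-2^n}, with μ(J_j^{(n)}) ≥ B·2^{-n} for every j. Then we reach a contradiction; hence μ must have a nonzero singular continuous component. -/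
open MeasureTheory Set Filter Topology

/-- Auxiliary counting lemma: if each member of a finset of indices corresponds to a set
containing some point `pt l` with `l < N`, and the sets are pairwise disjoint, then the
finset has at most `N` elements. -/
lemma aux_card_le_of_points {m : ℕ} (S : Finset (Fin m)) (Jf : Fin m → Set ℝ)
    (pt : ℕ → ℝ) (N : ℕ)
    (hd : Pairwise fun j j' => Disjoint (Jf j) (Jf j'))
    (hS : ∀ j ∈ S, ∃ l, l < N ∧ pt l ∈ Jf j) : S.card ≤ N := by
  classical
  have h : S.card ≤ (Finset.range N).card := by
    refine Finset.card_le_card_of_injOn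
      (fun j => if h : ∃ l, l < N ∧ pt l ∈ Jf j then h.choose else 0) ?_ ?_
    · intro j hj
      dsimp only
      rw [dif_pos (hS j hj)]
      exact Finset.mem_range.2 (hS j hj).choose_spec.1
    · intro j hj j' hj' hjj'
      dsimp only at hjj'
      rw [dif_pos (hS j (Finset.mem_coe.1 hj)), dif_pos (hS j' (Finset.mem_coe.1 hj'))] at hjj'
      by_contra hne
      have h1 : pt (hS j (Finset.mem_coe.1 hj)).choose ∈ Jf j :=
        (hS j (Finset.mem_coe.1 hj)).choose_spec.2
      have h2 : pt (hS j' (Finset.mem_coe.1 hj')).choose ∈ Jf j' :=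
        (hS j' (Finset.mem_coe.1 hj')).choose_spec.2
      rw [← hjj'] at h2
      exact Set.disjoint_left.1 (hd hne) h1 h2
  simpa using h

/-- Auxiliary: tail of an `ENNReal` series whose first `N` terms vanish. -/
lemma aux_tsum_tail (g : ℕ → ENNReal) (N : ℕ) (h0 : ∀ l < N, g l = 0) :
    ∑' l, g l = ∑' k, g (k + N) := by
  rw [← Summable.sum_add_tsum_nat_add' (f := g) (k := N) ENNReal.summable]
  rw [Finset.sum_eq_zero (fun l hl => h0 l (Finset.mem_range.1 hl)), zero_add]

set_option maxHeartbeats 1000000 in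
/-- If a finite measure `μ` on `ℝ` gives mass at least `B 2^{-n}` to each of `2^n`
pairwise disjoint intervals of length at most `C e^{-2^n}` (for every `n`),
then `μ` cannot be a sum of an absolutely continuous part and a purely atomic
part: we reach a contradiction. -/
theorem no_ac_plus_pp_decomposition
    (μ μac μpp : Measure ℝ) [IsFiniteMeasure μ]
    (C B : ℝ) (hC : 0 < C) (hB : 0 < B)
    (ρ : ℕ → ENNReal) (pt : ℕ → ℝ)
    (hac : μac ≪ volume)
    (hpp : μpp = Measure.sum (fun l => ρ l • Measure.dirac (pt l)))
    (hdecomp : μ = μac + μpp)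
    (a b : (n : ℕ) → Fin (2 ^ n) → ℝ)
    (hab : ∀ n j, a n j ≤ b n j)
    (hlen : ∀ n j, b n j - a n j ≤ C * Real.exp (-(2 : ℝ) ^ n))
    (hdisj : ∀ n, Pairwise fun j j' : Fin (2 ^ n) =>
      Disjoint (Icc (a n j) (b n j)) (Icc (a n j') (b n j')))
    (hmass : ∀ (n : ℕ) (j : Fin (2 ^ n)), ENNReal.ofReal (B * (2 : ℝ) ^ (-(n : ℝ))) ≤ μ (Icc (a n j) (b n j))) :
    False := by
  classical
  have hle_ac : μac ≤ μ := by rw [hdecomp]; exact Measure.le_add_right le_rfl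
  have hle_pp : μpp ≤ μ := by rw [hdecomp]; exact Measure.le_add_left le_rfl
  haveI : IsFiniteMeasure μac := isFiniteMeasure_of_le μ hle_ac
  haveI : IsFiniteMeasure μpp := isFiniteMeasure_of_le μ hle_pp
  set ε : ENNReal := ENNReal.ofReal (B / 8) with hεdef
  have hε0 : ε ≠ 0 := by
    simp only [hεdef, ne_eq, ENNReal.ofReal_eq_zero, not_le]
    linarith
  -- the total mass of the atoms is finite
  have hρ : ∑' l, ρ l ≠ ⊤ := by
    have h1 : μpp univ ≠ ⊤ := measure_ne_top μpp univ
    rw [hpp, Measure.sum_apply _ MeasurableSet.univ] at h1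
    simpa using h1
  -- choose `N` so that the tail of the atoms has mass `< ε`
  obtain ⟨N, hN⟩ : ∃ N, ∑' k, ρ (k + N) < ε := by
    have h := ENNReal.tendsto_sum_nat_add ρ hρ
    exact (h.eventually_lt_const (pos_iff_ne_zero.2 hε0)).exists
  -- uniform absolute continuity for `μac`
  obtain ⟨δ, hδ0, hδ⟩ : ∃ δ > (0 : ENNReal), ∀ s : Set ℝ, volume s < δ → μac s < ε := by
    obtain ⟨δ, hδ0, h⟩ := exists_pos_setLIntegral_lt_of_measure_lt
      (μ := (volume : Measure ℝ)) (f := μac.rnDeriv volume)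
      (Measure.lintegral_rnDeriv_lt_top μac volume).ne hε0
    refine ⟨δ, hδ0, fun s hs => ?_⟩
    have h2 := h s hs
    rwa [Measure.setLIntegral_rnDeriv hac] at h2
  -- choose `n` large
  obtain ⟨n1, hn1⟩ : ∃ n1 : ℕ, 2 * N < 2 ^ n1 := pow_unbounded_of_one_lt (2 * N) one_lt_two
  have htend : Tendsto (fun n : ℕ => ENNReal.ofReal ((2 : ℝ) ^ n * (C * Real.exp (-(2 : ℝ) ^ n))))
      atTop (𝓝 0) := by
    have h1 : Tendsto (fun x : ℝ => x * (C * Real.exp (-x))) atTop (𝓝 0) := by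
      have h2 := (Real.tendsto_pow_mul_exp_neg_atTop_nhds_zero 1).const_mul C
      simpa [mul_comm, mul_assoc, mul_left_comm] using h2
    have h3 : Tendsto (fun n : ℕ => (2 : ℝ) ^ n) atTop atTop :=
      tendsto_pow_atTop_atTop_of_one_lt one_lt_two
    have h4 := h1.comp h3
    have h5 := ENNReal.tendsto_ofReal h4
    simpa [Function.comp] using h5
  obtain ⟨n2, hn2⟩ : ∃ n2 : ℕ, ∀ n ≥ n2,
      ENNReal.ofReal ((2 : ℝ) ^ n * (C * Real.exp (-(2 : ℝ) ^ n))) < δ :=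
    (htend.eventually_lt_const hδ0).exists_forall_of_atTop
  set n := max n1 n2 with hn
  have h2n : 2 * N < 2 ^ n :=
    lt_of_lt_of_le hn1 (Nat.pow_le_pow_right (by norm_num) (le_max_left _ _))
  -- the intervals
  set J : Fin (2 ^ n) → Set ℝ := fun j => Icc (a n j) (b n j) with hJ
  have hJmeas : ∀ j, MeasurableSet (J j) := fun j => measurableSet_Icc
  -- the set of intervals containing an atom of index `< N`
  set T : Finset (Fin (2 ^ n)) := Finset.univ.filter (fun j => ∃ l, l < N ∧ pt l ∈ J j) with hT
  have hTcard : T.card ≤ N := by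
    refine aux_card_le_of_points T J pt N (hdisj n) ?_
    intro j hj
    rw [hT, Finset.mem_filter] at hj
    exact hj.2
  set G : Finset (Fin (2 ^ n)) := Tᶜ with hG
  have hGcard : 2 ^ n ≤ 2 * G.card := by
    have h1 : G.card = 2 ^ n - T.card := by
      rw [hG, Finset.card_compl]
      simp
    omega
  set U : Set ℝ := ⋃ j ∈ G, J j with hU
  have hUmeas : MeasurableSet U := G.measurableSet_biUnion (fun j _ => hJmeas j)
  -- lower bound on `μ U`
  have hlow : ENNReal.ofReal (B / 2) ≤ μ U := by
    have h1 : μ U = ∑ j ∈ G, μ (J j) := by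
      rw [hU]
      exact measure_biUnion_finset (fun j _ j' _ hne => hdisj n hne) (fun j _ => hJmeas j)
    have h2 : (G.card : ENNReal) * ENNReal.ofReal (B * (2 : ℝ) ^ (-(n : ℝ)))
        ≤ ∑ j ∈ G, μ (J j) := by
      calc (G.card : ENNReal) * ENNReal.ofReal (B * (2 : ℝ) ^ (-(n : ℝ)))
          = ∑ _j ∈ G, ENNReal.ofReal (B * (2 : ℝ) ^ (-(n : ℝ))) := by
            rw [Finset.sum_const, nsmul_eq_mul]
        _ ≤ ∑ j ∈ G, μ (J j) := Finset.sum_le_sum fun j _ => hmass n j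
    have h3 : ENNReal.ofReal (B / 2)
        ≤ (G.card : ENNReal) * ENNReal.ofReal (B * (2 : ℝ) ^ (-(n : ℝ))) := by
      rw [← ENNReal.ofReal_natCast G.card, ← ENNReal.ofReal_mul (by positivity)]
      apply ENNReal.ofReal_le_ofReal
      have hpow : (2 : ℝ) ^ (-(n : ℝ)) = ((2 : ℝ) ^ n)⁻¹ := by
        rw [Real.rpow_neg (by norm_num), Real.rpow_natCast]
      rw [hpow]
      have hp : (0 : ℝ) < (2 : ℝ) ^ n := by positivity
      have hcard : (2 : ℝ) ^ n ≤ 2 * (G.card : ℝ) := by exact_mod_cast hGcard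
      have h5 : (1 : ℝ) / 2 ≤ (G.card : ℝ) / (2 : ℝ) ^ n := by
        rw [div_le_div_iff₀ (by norm_num) hp]
        linarith
      calc B / 2 = B * (1 / 2) := by ring
        _ ≤ B * ((G.card : ℝ) / (2 : ℝ) ^ n) := by
            exact mul_le_mul_of_nonneg_left h5 hB.le
        _ = (G.card : ℝ) * (B * ((2 : ℝ) ^ n)⁻¹) := by ring
    rw [h1]
    exact h3.trans h2
  -- upper bound on `μac U`
  have hacU : μac U < ε := by
    apply hδ
    calc volume U ≤ ∑ j ∈ G, volume (J j) := measure_biUnion_finset_le G J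
      _ ≤ ∑ _j ∈ G, ENNReal.ofReal (C * Real.exp (-(2 : ℝ) ^ n)) := by
          apply Finset.sum_le_sum
          intro j _
          rw [hJ, Real.volume_Icc]
          exact ENNReal.ofReal_le_ofReal (hlen n j)
      _ = (G.card : ENNReal) * ENNReal.ofReal (C * Real.exp (-(2 : ℝ) ^ n)) := by
          rw [Finset.sum_const, nsmul_eq_mul]
      _ ≤ ((2 ^ n : ℕ) : ENNReal) * ENNReal.ofReal (C * Real.exp (-(2 : ℝ) ^ n)) := by
          gcongr
          · exact_mod_cast (Finset.card_le_univ G).trans (by simp)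
      _ = ENNReal.ofReal ((2 : ℝ) ^ n * (C * Real.exp (-(2 : ℝ) ^ n))) := by
          rw [← ENNReal.ofReal_natCast (2 ^ n), ← ENNReal.ofReal_mul (by positivity)]
          norm_num
      _ < δ := hn2 n (le_max_right _ _)
  -- upper bound on `μpp U`
  have hppU : μpp U < ε := by
    have hnotin : ∀ l < N, pt l ∉ U := by
      intro l hl hmem
      rw [hU, Set.mem_iUnion₂] at hmem
      obtain ⟨j, hjG, hj⟩ := hmem
      have hjT : j ∈ T := by
        rw [hT, Finset.mem_filter]
        exact ⟨Finset.mem_univ j, l, hl, hj⟩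
      rw [hG, Finset.mem_compl] at hjG
      exact hjG hjT
    have h1 : μpp U = ∑' l, ρ l * U.indicator 1 (pt l) := by
      rw [hpp, Measure.sum_apply _ hUmeas]
      congr 1
      ext l
      rw [Measure.smul_apply, Measure.dirac_apply' _ hUmeas, smul_eq_mul]
    rw [h1]
    have h2 : ∑' l, ρ l * U.indicator 1 (pt l)
        = ∑' k, ρ (k + N) * U.indicator 1 (pt (k + N)) := by
      apply aux_tsum_tail (fun l => ρ l * U.indicator 1 (pt l)) N
      intro l hl
      rw [Set.indicator_of_notMem (hnotin l hl)]
      simp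
    rw [h2]
    refine lt_of_le_of_lt (ENNReal.tsum_le_tsum fun k => ?_) hN
    by_cases h : pt (k + N) ∈ U
    · simp [Set.indicator_of_mem h]
    · simp [Set.indicator_of_notMem h]
  -- contradiction
  have hfinal : μ U < ENNReal.ofReal (B / 2) := by
    calc μ U = μac U + μpp U := by rw [hdecomp]; rfl
      _ < ε + ε := ENNReal.add_lt_add hacU hppU
      _ = ENNReal.ofReal (B / 4) := by
          rw [hεdef, ← ENNReal.ofReal_add (by linarith) (by linarith)]
          congr 1
          ring
      _ < ENNReal.ofReal (B / 2) := by
          rw [ENNReal.ofReal_lt_ofReal_iff (by linarith)]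
          linarith
  exact absurd (lt_of_le_of_lt hlow hfinal) (lt_irrefl _)
end

section
/- Let g : [A, ∞) → ℝ be C^1 with |g'(x)| ≥ a > 0 and g' monotone (or g'' bounded: |g''| ≤ M), and let h : [A,∞) → ℝ be C^1. Then for A ≤ y ≤ x, |∫_y^x h(s) cos(g(s)) ds| ≤ (1/a)( |h(x)| + |h(y)| + ∫_y^x |h'(s)| ds + (M/a) ∫_y^x |h(s)| ds ). (Integration by parts estimate for oscillatory integrals.) -/
open Real MeasureTheory intervalIntegral Set

/-- Non-stationary phase / integration by parts estimate: if `|g'| ≥ a > 0`,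
`|g''| ≤ M`, then
`|∫_y^x h cos g| ≤ (1/a)(|h x| + |h y| + ∫_y^x |h'| + (M/a) ∫_y^x |h|)`. -/
theorem oscillatory_integral_bound
    (a M A y x : ℝ) (g g' g'' h h' : ℝ → ℝ)
    (ha : 0 < a) (hM : 0 < M)
    (hAy : A ≤ y) (hyx : y ≤ x)
    (hg : ∀ s, A ≤ s → HasDerivAt g (g' s) s)
    (hg' : ∀ s, A ≤ s → HasDerivAt g' (g'' s) s)
    (hgl : ∀ s, A ≤ s → a ≤ |g' s|)
    (hgu : ∀ s, A ≤ s → |g'' s| ≤ M)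
    (hh : ∀ s, A ≤ s → HasDerivAt h (h' s) s)
    (hh'c : ContinuousOn h' (Ici A)) :
    |∫ s in y..x, h s * Real.cos (g s)| ≤
      (1 / a) * (|h x| + |h y| + (∫ s in y..x, |h' s|)
        + (M / a) * ∫ s in y..x, |h s|) := by
  set φ : ℝ → ℝ := fun s => h s / g' s * Real.sin (g s) with hφdef
  set u : ℝ → ℝ := fun s =>
    (h' s * g' s - h s * g'' s) / (g' s) ^ 2 * Real.sin (g s) with hudef
  have hAx : A ≤ x := hAy.trans hyx
  have hgne : ∀ s, A ≤ s → g' s ≠ 0 := by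
    intro s hs
    have : (0 : ℝ) < |g' s| := ha.trans_le (hgl s hs)
    exact abs_pos.mp this
  -- the key derivative computation
  have key : ∀ s, A ≤ s → HasDerivAt φ (u s + h s * Real.cos (g s)) s := by
    intro s hs
    have hne := hgne s hs
    have h1 := (hh s hs).div (hg' s hs) hne
    have h2 := (Real.hasDerivAt_sin (g s)).comp s (hg s hs)
    have h3 : HasDerivAt φ _ s := h1.mul h2
    have e2 : h s * Real.cos (g s) = h s / g' s * (Real.cos (g s) * g' s) := by
      field_simp
    convert h3 using 1
    simp only [hudef, Function.comp_apply, Pi.div_apply]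
    rw [e2]
  -- continuity facts
  have hgc : ContinuousOn g (Ici A) := fun s hs => ((hg s hs).continuousAt).continuousWithinAt
  have hhc : ContinuousOn h (Ici A) := fun s hs => ((hh s hs).continuousAt).continuousWithinAt
  have hsubIcc : Icc y x ⊆ Ici A := fun s hs => hAy.trans hs.1
  have hsubIoc : Ioc y x ⊆ Ici A := fun s hs => hAy.trans hs.1.le
  have huIcc : uIcc y x = Icc y x := uIcc_of_le hyx
  have hcosc : ContinuousOn (fun s => h s * Real.cos (g s)) (Ici A) :=
    hhc.mul (Real.continuous_cos.comp_continuousOn hgc)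
  have hcos_int : IntervalIntegrable (fun s => h s * Real.cos (g s)) volume y x := by
    apply ContinuousOn.intervalIntegrable
    exact hcosc.mono (huIcc ▸ hsubIcc)
  -- the bound function
  set B : ℝ → ℝ := fun s => (1 / a) * |h' s| + (M / a ^ 2) * |h s| with hBdef
  have hBc : ContinuousOn B (Ici A) :=
    (hh'c.abs.const_smul (1 / a)).add (hhc.abs.const_smul (M / a ^ 2))
  have hB_int : IntervalIntegrable B volume y x :=
    (hBc.mono (huIcc ▸ hsubIcc)).intervalIntegrable
  -- pointwise bound on u
  have hptw : ∀ s, A ≤ s → |u s| ≤ B s := by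
    intro s hs
    have hb : a ≤ |g' s| := hgl s hs
    have hb0 : (0 : ℝ) < |g' s| := ha.trans_le hb
    have hbne : |g' s| ≠ 0 := hb0.ne'
    have hnum : |h' s * g' s - h s * g'' s| ≤ |h' s| * |g' s| + |h s| * M := by
      calc |h' s * g' s - h s * g'' s| ≤ |h' s * g' s| + |h s * g'' s| := abs_sub _ _
        _ = |h' s| * |g' s| + |h s| * |g'' s| := by rw [abs_mul, abs_mul]
        _ ≤ |h' s| * |g' s| + |h s| * M := by
            have := hgu s hs
            have := abs_nonneg (h s)
            nlinarith
    have hsq : (g' s) ^ 2 = |g' s| ^ 2 := (sq_abs _).symm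
    calc |u s| = |h' s * g' s - h s * g'' s| / |g' s| ^ 2 * |Real.sin (g s)| := by
          rw [hudef]
          simp only [abs_mul, abs_div, hsq]
          rw [abs_of_nonneg (by positivity : (0:ℝ) ≤ |g' s| ^ 2)]
      _ ≤ |h' s * g' s - h s * g'' s| / |g' s| ^ 2 * 1 :=
          mul_le_mul_of_nonneg_left (Real.abs_sin_le_one _) (by positivity)
      _ = |h' s * g' s - h s * g'' s| / |g' s| ^ 2 := mul_one _
      _ ≤ (|h' s| * |g' s| + |h s| * M) / |g' s| ^ 2 := by gcongr
      _ = |h' s| / |g' s| + |h s| * M / |g' s| ^ 2 := by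
          have hgen : ∀ X Y b : ℝ, b ≠ 0 → (X * b + Y) / b ^ 2 = X / b + Y / b ^ 2 := by
            intro X Y b hbn
            field_simp
          exact hgen _ _ _ hbne
      _ ≤ |h' s| / a + |h s| * M / a ^ 2 := by
          gcongr
      _ = B s := by rw [hBdef]; ring
  -- measurability / integrability of u
  have hu_aesm : AEStronglyMeasurable u (volume.restrict (Ioc y x)) := by
    have m1 : AEStronglyMeasurable (deriv φ) (volume.restrict (Ioc y x)) :=
      (measurable_deriv φ).aestronglyMeasurable.restrict
    have m2 : AEStronglyMeasurable (fun s => h s * Real.cos (g s))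
        (volume.restrict (Ioc y x)) :=
      (hcosc.mono hsubIoc).aestronglyMeasurable measurableSet_Ioc
    refine (m1.sub m2).congr ?_
    rw [Filter.EventuallyEq, ae_restrict_iff' measurableSet_Ioc]
    filter_upwards with s hs
    have hAs : A ≤ s := hsubIoc hs
    have hd := (key s hAs).deriv
    simp only [Pi.sub_apply]
    rw [hd]; ring
  have hu_int : IntervalIntegrable u volume y x := by
    rw [intervalIntegrable_iff_integrableOn_Ioc_of_le hyx]
    refine Integrable.mono' (g := B) ((intervalIntegrable_iff_integrableOn_Ioc_of_le hyx).mp hB_int) hu_aesm ?_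
    rw [ae_restrict_iff' measurableSet_Ioc]
    filter_upwards with s hs
    simpa [Real.norm_eq_abs] using hptw s (hsubIoc hs)
  -- FTC
  have hftc : ∫ s in y..x, (u s + h s * Real.cos (g s)) = φ x - φ y := by
    apply intervalIntegral.integral_eq_sub_of_hasDerivAt
    · intro s hs
      exact key s (hAy.trans (huIcc ▸ hs).1)
    · exact hu_int.add hcos_int
  have hsplit : (∫ s in y..x, u s) + ∫ s in y..x, h s * Real.cos (g s) = φ x - φ y := by
    rw [← intervalIntegral.integral_add hu_int hcos_int]; exact hftc
  have hmain : ∫ s in y..x, h s * Real.cos (g s) = φ x - φ y - ∫ s in y..x, u s := by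
    linarith
  -- boundary terms
  have hbd : ∀ s, A ≤ s → |φ s| ≤ |h s| / a := by
    intro s hs
    have hb : a ≤ |g' s| := hgl s hs
    have hb0 : (0 : ℝ) < |g' s| := ha.trans_le hb
    calc |φ s| = |h s| / |g' s| * |Real.sin (g s)| := by
          rw [hφdef]; simp [abs_mul, abs_div]
      _ ≤ |h s| / |g' s| * 1 :=
          mul_le_mul_of_nonneg_left (Real.abs_sin_le_one _) (by positivity)
      _ = |h s| / |g' s| := mul_one _
      _ ≤ |h s| / a := by gcongr
  -- integrability of |h| and |h'|
  have hih : IntervalIntegrable (fun s => |h s|) volume y x :=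
    (hhc.abs.mono (huIcc ▸ hsubIcc)).intervalIntegrable
  have hih' : IntervalIntegrable (fun s => |h' s|) volume y x :=
    (hh'c.abs.mono (huIcc ▸ hsubIcc)).intervalIntegrable
  have hBsum : (∫ s in y..x, B s)
      = (1 / a) * (∫ s in y..x, |h' s|) + (M / a ^ 2) * ∫ s in y..x, |h s| := by
    rw [hBdef]
    rw [intervalIntegral.integral_add (hih'.const_mul _) (hih.const_mul _),
      intervalIntegral.integral_const_mul, intervalIntegral.integral_const_mul]
  have hIu : |∫ s in y..x, u s| ≤
      (1 / a) * (∫ s in y..x, |h' s|) + (M / a ^ 2) * ∫ s in y..x, |h s| := by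
    calc |∫ s in y..x, u s| ≤ ∫ s in y..x, |u s| :=
          intervalIntegral.abs_integral_le_integral_abs hyx
      _ ≤ ∫ s in y..x, B s := by
          apply intervalIntegral.integral_mono_on hyx hu_int.abs hB_int
          intro s hs
          exact hptw s (hsubIcc hs)
      _ = _ := hBsum
  -- put everything together
  have hfin : |∫ s in y..x, h s * Real.cos (g s)| ≤
      |h x| / a + |h y| / a + ((1 / a) * (∫ s in y..x, |h' s|)
        + (M / a ^ 2) * ∫ s in y..x, |h s|) := by
    rw [hmain]
    have h1 := hbd x hAx
    have h2 := hbd y hAy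
    calc |φ x - φ y - ∫ s in y..x, u s| ≤ |φ x - φ y| + |∫ s in y..x, u s| :=
          abs_sub _ _
      _ ≤ (|φ x| + |φ y|) + |∫ s in y..x, u s| := by
          have := abs_sub (φ x) (φ y)
          linarith
      _ ≤ |h x| / a + |h y| / a + ((1 / a) * (∫ s in y..x, |h' s|)
            + (M / a ^ 2) * ∫ s in y..x, |h s|) := by
          linarith [hIu]
  calc |∫ s in y..x, h s * Real.cos (g s)| ≤ _ := hfin
    _ = (1 / a) * (|h x| + |h y| + (∫ s in y..x, |h' s|)
        + (M / a) * ∫ s in y..x, |h s|) := by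
        have hane : a ≠ 0 := ha.ne'
        field_simp
        ring
end

section
/- Let (b_n)_{n≥1} be a sequence of positive reals with b_n ≥ c·min(1, g/(d + 3π n)) for constants c, g, d > 0. Then the series Σ_{n=0}^∞ exp(-Σ_{j=1}^n b_j) converges, provided c·g/(3π) > 1. -/
/-!
Since `min 1 (g / q) ≥ g / (g + q)`, every `b n` dominates `α · 3π / (A + 3π n)` with
`α = c g / (3π) > 1` and `A = g + d`. As `log (x + h) - log x ≤ h / x`, the partial sums
`b 1 + ⋯ + b n` then grow at least like `α log (A + 3π (n + 1))` minus a constant, so the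
terms of the series are `O(n ^ (-α))`, a summable `p`-series.
-/

open Real

lemma div_add_le_min_one_div {g q : ℝ} (hg : 0 ≤ g) (hq : 0 < q) :
    g / (g + q) ≤ min 1 (g / q) :=
  le_min ((div_le_one (by positivity)).2 (by linarith))
    (div_le_div_of_nonneg_left hg hq (by linarith))

lemma log_sub_log_le_sub_div {x y : ℝ} (hx : 0 < x) (hy : 0 < y) :
    log y - log x ≤ (y - x) / x := by
  rw [sub_div, div_self hx.ne', ← log_div hy.ne' hx.ne']
  exact log_le_sub_one_of_pos (div_pos hy hx)

lemma sub_le_sum_Icc_of_sub_le {u b : ℕ → ℝ} (h : ∀ n, 1 ≤ n → u (n + 1) - u n ≤ b n)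
    (n : ℕ) : u (n + 1) - u 1 ≤ ∑ j ∈ Finset.Icc 1 n, b j := by
  induction n with
  | zero => simp
  | succ n ih =>
    rw [Finset.sum_Icc_succ_top (by omega)]
    linarith [h (n + 1) (by omega)]

lemma summable_affine_rpow_neg {α A s : ℝ} (hα : 1 < α) (hA : 0 ≤ A) (hs : 0 < s) :
    Summable fun n : ℕ => (A + s * (n + 1)) ^ (-α) := by
  have hp : Summable fun n : ℕ => ((n : ℝ) + 1) ^ (-α) := by
    simpa using (summable_nat_add_iff 1).2 (Real.summable_nat_rpow.2 (by linarith : -α < -1))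
  refine (hp.mul_left (s ^ (-α))).of_nonneg_of_le (fun n => by positivity) fun n => ?_
  rw [← mul_rpow hs.le (by positivity)]
  exact rpow_le_rpow_of_nonpos (by positivity) (by linarith) (by linarith)

theorem summable_exp_neg_sum_Icc_of_div_affine_le {α A s : ℝ} {b : ℕ → ℝ} (hα : 1 < α)
    (hA : 0 ≤ A) (hs : 0 < s) (hb : ∀ n, 1 ≤ n → α * s / (A + s * n) ≤ b n) :
    Summable fun n : ℕ => exp (-∑ j ∈ Finset.Icc 1 n, b j) := by
  set x : ℕ → ℝ := fun n => A + s * n with hx_def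
  have hx : ∀ n, 1 ≤ n → 0 < x n := fun n hn => by
    have : (1 : ℝ) ≤ n := by exact_mod_cast hn
    simp only [hx_def]; nlinarith
  have hgrowth (n : ℕ) : α * log (x (n + 1)) - α * log (x 1) ≤ ∑ j ∈ Finset.Icc 1 n, b j := by
    refine sub_le_sum_Icc_of_sub_le (u := fun n => α * log (x n)) (fun n hn => ?_) n
    have hstep : x (n + 1) - x n = s := by simp only [hx_def]; push_cast; ring
    calc α * log (x (n + 1)) - α * log (x n) = α * (log (x (n + 1)) - log (x n)) := by ring
      _ ≤ α * (s / x n) := by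
        rw [← hstep]
        exact mul_le_mul_of_nonneg_left
          (log_sub_log_le_sub_div (hx n hn) (hx (n + 1) (by omega))) (by linarith)
      _ = α * s / x n := by ring
      _ ≤ b n := hb n hn
  refine ((summable_affine_rpow_neg hα hA hs).mul_left (x 1 ^ α)).of_nonneg_of_le
    (fun n => (exp_pos _).le) fun n => ?_
  have hxn : x (n + 1) = A + s * (n + 1) := by simp only [hx_def]; push_cast; ring
  calc exp (-∑ j ∈ Finset.Icc 1 n, b j) ≤ exp (log (x 1) * α - log (x (n + 1)) * α) :=
        exp_le_exp.2 (by linarith [hgrowth n])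
    _ = x 1 ^ α * (A + s * (n + 1)) ^ (-α) := by
        rw [exp_sub, ← rpow_def_of_pos (hx 1 le_rfl), ← rpow_def_of_pos (hx (n + 1) (by omega)),
          hxn, rpow_neg (by positivity), div_eq_mul_inv]

theorem summable_exp_neg_partial_sums_general
    (c g d : ℝ) (b : ℕ → ℝ)
    (hc : 0 < c) (hg : 0 < g) (hd : 0 < d)
    (hcg : 3 * Real.pi < c * g)
    (hb : ∀ n : ℕ, 1 ≤ n → c * min 1 (g / (d + 3 * Real.pi * n)) ≤ b n) :
    Summable (fun n : ℕ => Real.exp (-(∑ j ∈ Finset.Icc 1 n, b j))) := by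
  have hpi : 0 < 3 * π := by positivity
  refine summable_exp_neg_sum_Icc_of_div_affine_le (α := c * g / (3 * π)) (A := g + d)
    ((one_lt_div hpi).2 hcg) (by positivity) hpi fun n hn => ?_
  have hq : 0 < d + 3 * π * n := by positivity
  calc c * g / (3 * π) * (3 * π) / (g + d + 3 * π * n) = c * (g / (g + (d + 3 * π * n))) := by
        field_simp; ring
    _ ≤ c * min 1 (g / (d + 3 * π * n)) :=
        mul_le_mul_of_nonneg_left (div_add_le_min_one_div hg.le hq) hc.le
    _ ≤ b n := hb n hn

/-- If `b_n ≥ c · min(1, g/(d + 3πn))` with `c g > 3π`, then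
`Σ_n exp(-(b_1 + ⋯ + b_n))` converges. -/
theorem summable_exp_neg_partial_sums
    (c g d : ℝ) (b : ℕ → ℝ)
    (hc : 0 < c) (hg : 0 < g) (hd : 0 < d)
    (hcg : 3 * Real.pi < c * g)
    (hbpos : ∀ n : ℕ, 1 ≤ n → 0 < b n)
    (hb : ∀ n : ℕ, 1 ≤ n → c * min 1 (g / (d + 3 * Real.pi * n)) ≤ b n) :
    Summable (fun n : ℕ => Real.exp (-(∑ j ∈ Finset.Icc 1 n, b j))) :=
  summable_exp_neg_partial_sums_general c g d b hc hg hd hcg hb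
end

section
/- Let a > 0 and suppose θ_1, θ_2, ψ : [0,∞) → ℝ are differentiable with |(ψ - θ_1 - θ_2)'(s)| ≥ a for all s and sign constant, and θ_1'', θ_2'', ψ'' exist with |θ_i''|, |ψ''| ≤ K. Let F : [0,∞) → ℝ be piecewise C^1 with at most one jump discontinuity of size ≤ 2‖F‖_∞. Then for 0 ≤ y ≤ x, |∫_y^x F(s) cos(ψ(s) - θ_1(s) - θ_2(s)) ds| ≤ (C/a)( ‖F‖_∞ + ∫_y^x |F'(s)| ds + (K/a) ∫_y^x |F(s)| ds ) for a universal constant C. -/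
open Real MeasureTheory intervalIntegral Set
open Filter Topology

lemma osc_core (a M Fmax y t : ℝ) (g g' g'' F F' : ℝ → ℝ)
    (ha : 0 < a) (hFmax : 0 ≤ Fmax) (hyt : y ≤ t)
    (hg : ∀ s, HasDerivAt g (g' s) s) (hg' : ∀ s, HasDerivAt g' (g'' s) s)
    (hga : ∀ s, a ≤ |g' s|) (hgM : ∀ s, |g'' s| ≤ M)
    (hF : ∀ s, |F s| ≤ Fmax)
    (hFd : ∀ s ∈ Icc y t, HasDerivAt F (F' s) s)
    (hFi : IntervalIntegrable F volume y t)
    (hF'i : IntervalIntegrable F' volume y t) :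
    |∫ s in y..t, F s * Real.cos (g s)| ≤
      (1 / a) * (2 * Fmax + (∫ s in y..t, |F' s|) + (M / a) * ∫ s in y..t, |F s|) := by
  have hM : 0 ≤ M := (abs_nonneg _).trans (hgM 0)
  have hg0 : ∀ s, g' s ≠ 0 := by
    intro s h
    have := hga s
    rw [h, abs_zero] at this
    linarith
  have hgc : Continuous g := by
    rw [continuous_iff_continuousAt]; exact fun s => (hg s).continuousAt
  have hg'c : Continuous g' := by
    rw [continuous_iff_continuousAt]; exact fun s => (hg' s).continuousAt
  have hg''m : Measurable g'' := by
    have : g'' = deriv g' := funext fun s => ((hg' s).deriv).symm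
    rw [this]; exact measurable_deriv _
  set w : ℝ → ℝ := fun s => Real.sin (g s) * g'' s / (g' s) ^ 2 with hw
  set E : ℝ → ℝ := fun s => F' s * (Real.sin (g s) / g' s) - w s * F s with hE
  set φ : ℝ → ℝ := fun s => F s * Real.sin (g s) / g' s with hφ
  -- bounds on auxiliary functions
  have hsq : ∀ s, a ^ 2 ≤ (g' s) ^ 2 := by
    intro s; rw [← sq_abs (g' s)]
    exact pow_le_pow_left₀ ha.le (hga s) 2
  have hwb : ∀ s, |w s| ≤ M / a ^ 2 := by
    intro s
    rw [abs_div, abs_mul]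
    refine div_le_div₀ hM ?_ (by positivity) ?_
    · calc |Real.sin (g s)| * |g'' s| ≤ 1 * M :=
            mul_le_mul (Real.abs_sin_le_one _) (hgM s) (abs_nonneg _) zero_le_one
        _ = M := one_mul M
    · rw [abs_of_nonneg (sq_nonneg _)]; exact hsq s
  have hsinb : ∀ s, |Real.sin (g s) / g' s| ≤ 1 / a := by
    intro s
    rw [abs_div]
    exact div_le_div₀ zero_le_one (Real.abs_sin_le_one _) ha (hga s)
  have hφb : ∀ s, |φ s| ≤ Fmax / a := by
    intro s
    simp only [hφ]
    rw [abs_div, abs_mul]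
    refine div_le_div₀ hFmax ?_ ha (hga s)
    calc |F s| * |Real.sin (g s)| ≤ Fmax * 1 :=
          mul_le_mul (hF s) (Real.abs_sin_le_one _) (abs_nonneg _) hFmax
      _ = Fmax := mul_one Fmax
  -- derivative of φ
  have hφd : ∀ s ∈ Icc y t, HasDerivAt φ (F s * Real.cos (g s) + E s) s := by
    intro s hs
    have hnum : HasDerivAt (fun u => F u * Real.sin (g u))
        (F' s * Real.sin (g s) + F s * (Real.cos (g s) * g' s)) s :=
      (hFd s hs).mul ((hg s).sin)
    have := hnum.div (hg' s) (hg0 s)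
    refine this.congr_deriv ?_
    simp only [hE, hw]
    field_simp [hg0 s]
    ring
  -- integrability
  have hcosc : Continuous fun s => Real.cos (g s) := Real.continuous_cos.comp hgc
  have hInt1 : IntervalIntegrable (fun s => F s * Real.cos (g s)) volume y t :=
    hFi.mul_continuousOn hcosc.continuousOn
  have hInt2 : IntervalIntegrable (fun s => F' s * (Real.sin (g s) / g' s)) volume y t :=
    hF'i.mul_continuousOn ((Real.continuous_sin.comp hgc).div hg'c hg0).continuousOn
  have hwm : Measurable w :=
    ((Real.measurable_sin.comp hgc.measurable).mul hg''m).div (hg'c.measurable.pow_const 2)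
  have hInt3 : IntervalIntegrable (fun s => w s * F s) volume y t := by
    constructor
    · exact hFi.1.bdd_mul hwm.aestronglyMeasurable (c := M / a ^ 2) (Eventually.of_forall fun s => by
        rw [Real.norm_eq_abs]; exact hwb s)
    · exact hFi.2.bdd_mul hwm.aestronglyMeasurable (c := M / a ^ 2) (Eventually.of_forall fun s => by
        rw [Real.norm_eq_abs]; exact hwb s)
  have hIntE : IntervalIntegrable E volume y t := hInt2.sub hInt3
  -- FTC
  have key : (∫ s in y..t, (F s * Real.cos (g s) + E s)) = φ t - φ y := by
    refine integral_eq_sub_of_hasDerivAt (fun s hs => ?_) (hInt1.add hIntE)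
    exact hφd s (by rwa [uIcc_of_le hyt] at hs)
  have hsplit : (∫ s in y..t, F s * Real.cos (g s)) = (φ t - φ y) - ∫ s in y..t, E s := by
    rw [← key, integral_add hInt1 hIntE]; ring
  -- bound on ∫ E
  have hEb : ∀ s, |E s| ≤ |F' s| * (1 / a) + |F s| * (M / a ^ 2) := by
    intro s
    refine (abs_sub _ _).trans ?_
    gcongr
    · rw [abs_mul]
      exact mul_le_mul_of_nonneg_left (hsinb s) (abs_nonneg _)
    · rw [abs_mul, mul_comm]
      exact mul_le_mul_of_nonneg_left (hwb s) (abs_nonneg _)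
  have hIntEabs : |∫ s in y..t, E s| ≤
      (∫ s in y..t, |F' s|) * (1 / a) + (∫ s in y..t, |F s|) * (M / a ^ 2) := by
    calc |∫ s in y..t, E s| ≤ ∫ s in y..t, |E s| := abs_integral_le_integral_abs hyt
      _ ≤ ∫ s in y..t, (|F' s| * (1 / a) + |F s| * (M / a ^ 2)) := by
          refine integral_mono_on hyt hIntE.abs ?_ (fun s _ => hEb s)
          exact (hF'i.abs.mul_const _).add (hFi.abs.mul_const _)
      _ = (∫ s in y..t, |F' s|) * (1 / a) + (∫ s in y..t, |F s|) * (M / a ^ 2) := by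
          rw [integral_add (hF'i.abs.mul_const _) (hFi.abs.mul_const _),
            intervalIntegral.integral_mul_const, intervalIntegral.integral_mul_const]
  -- conclude
  have hfinal : |∫ s in y..t, F s * Real.cos (g s)| ≤
      Fmax / a + Fmax / a +
        ((∫ s in y..t, |F' s|) * (1 / a) + (∫ s in y..t, |F s|) * (M / a ^ 2)) := by
    rw [hsplit]
    have h1 := hφb t
    have h2 := hφb y
    have := abs_sub (φ t - φ y) (∫ s in y..t, E s)
    have := abs_sub (φ t) (φ y)
    linarith
  have heq : (1 / a) * (2 * Fmax + (∫ s in y..t, |F' s|) + (M / a) * ∫ s in y..t, |F s|) =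
      Fmax / a + Fmax / a +
        ((∫ s in y..t, |F' s|) * (1 / a) + (∫ s in y..t, |F s|) * (M / a ^ 2)) := by
    field_simp
    ring
  rw [heq]; exact hfinal

lemma osc_left (a M Fmax y q : ℝ) (g g' g'' F F' : ℝ → ℝ)
    (ha : 0 < a) (hFmax : 0 ≤ Fmax) (hyq : y ≤ q)
    (hg : ∀ s, HasDerivAt g (g' s) s) (hg' : ∀ s, HasDerivAt g' (g'' s) s)
    (hga : ∀ s, a ≤ |g' s|) (hgM : ∀ s, |g'' s| ≤ M)
    (hF : ∀ s, |F s| ≤ Fmax)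
    (hFd : ∀ s ∈ Ico y q, HasDerivAt F (F' s) s)
    (hFi : IntervalIntegrable F volume y q)
    (hF'i : IntervalIntegrable F' volume y q) :
    |∫ s in y..q, F s * Real.cos (g s)| ≤
      (1 / a) * (2 * Fmax + (∫ s in y..q, |F' s|) + (M / a) * ∫ s in y..q, |F s|) := by
  have hM : 0 ≤ M := (abs_nonneg _).trans (hgM 0)
  rcases hyq.eq_or_lt with rfl | hlt
  · simp only [intervalIntegral.integral_same, abs_zero, add_zero, mul_zero]
    positivity
  have hgc : Continuous g := by
    rw [continuous_iff_continuousAt]; exact fun s => (hg s).continuousAt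
  have hcosc : Continuous fun s => Real.cos (g s) := Real.continuous_cos.comp hgc
  have hFcos : IntervalIntegrable (fun s => F s * Real.cos (g s)) volume y q :=
    hFi.mul_continuousOn hcosc.continuousOn
  have hIcc : IntegrableOn (fun s => F s * Real.cos (g s)) (uIcc y q) volume := by
    rw [uIcc_of_le hyq, integrableOn_Icc_iff_integrableOn_Ioc]
    exact hFcos.1
  have hPc : ContinuousOn (fun u => ∫ s in y..u, F s * Real.cos (g s)) (Icc y q) := by
    have := continuousOn_primitive_interval (μ := volume) (a := y) (b := q) hIcc
    rwa [uIcc_of_le hyq] at this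
  have hne : (𝓝[Ico y q] q).NeBot := by
    refine mem_closure_iff_nhdsWithin_neBot.mp ?_
    rw [closure_Ico hlt.ne]
    exact right_mem_Icc.mpr hyq
  have htend : Tendsto (fun u => |∫ s in y..u, F s * Real.cos (g s)|) (𝓝[Ico y q] q)
      (𝓝 |∫ s in y..q, F s * Real.cos (g s)|) :=
    (((hPc q (right_mem_Icc.mpr hyq)).mono Ico_subset_Icc_self)).abs
  refine le_of_tendsto htend ?_
  filter_upwards [self_mem_nhdsWithin] with u hu
  have husub : uIcc y u ⊆ uIcc y q :=
    uIcc_subset_uIcc left_mem_uIcc (by rw [uIcc_of_le hyq]; exact ⟨hu.1, hu.2.le⟩)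
  have hcore := osc_core a M Fmax y u g g' g'' F F' ha hFmax hu.1 hg hg' hga hgM hF
    (fun s hs => hFd s ⟨hs.1, lt_of_le_of_lt hs.2 hu.2⟩)
    (hFi.mono_set husub) (hF'i.mono_set husub)
  refine hcore.trans ?_
  have h1 : (∫ s in y..u, |F' s|) ≤ ∫ s in y..q, |F' s| :=
    integral_mono_interval le_rfl hu.1 hu.2.le
      (Eventually.of_forall fun s => abs_nonneg _) hF'i.abs
  have h2 : (∫ s in y..u, |F s|) ≤ ∫ s in y..q, |F s| :=
    integral_mono_interval le_rfl hu.1 hu.2.le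
      (Eventually.of_forall fun s => abs_nonneg _) hFi.abs
  gcongr

lemma osc_right (a M Fmax q x : ℝ) (g g' g'' F F' : ℝ → ℝ)
    (ha : 0 < a) (hFmax : 0 ≤ Fmax) (hqx : q ≤ x)
    (hg : ∀ s, HasDerivAt g (g' s) s) (hg' : ∀ s, HasDerivAt g' (g'' s) s)
    (hga : ∀ s, a ≤ |g' s|) (hgM : ∀ s, |g'' s| ≤ M)
    (hF : ∀ s, |F s| ≤ Fmax)
    (hFd : ∀ s ∈ Ioc q x, HasDerivAt F (F' s) s)
    (hFi : IntervalIntegrable F volume q x)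
    (hF'i : IntervalIntegrable F' volume q x) :
    |∫ s in q..x, F s * Real.cos (g s)| ≤
      (1 / a) * (2 * Fmax + (∫ s in q..x, |F' s|) + (M / a) * ∫ s in q..x, |F s|) := by
  have hM : 0 ≤ M := (abs_nonneg _).trans (hgM 0)
  rcases hqx.eq_or_lt with rfl | hlt
  · simp only [intervalIntegral.integral_same, abs_zero, add_zero, mul_zero]
    positivity
  have hgc : Continuous g := by
    rw [continuous_iff_continuousAt]; exact fun s => (hg s).continuousAt
  have hcosc : Continuous fun s => Real.cos (g s) := Real.continuous_cos.comp hgc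
  have hFcos : IntervalIntegrable (fun s => F s * Real.cos (g s)) volume q x :=
    hFi.mul_continuousOn hcosc.continuousOn
  have hIcc : IntegrableOn (fun s => F s * Real.cos (g s)) (uIcc q x) volume := by
    rw [uIcc_of_le hqx, integrableOn_Icc_iff_integrableOn_Ioc]
    exact hFcos.1
  have hPc : ContinuousOn (fun u => ∫ s in u..x, F s * Real.cos (g s)) (Icc q x) := by
    have := continuousOn_primitive_interval_left (μ := volume) (a := q) (b := x) hIcc
    rwa [uIcc_of_le hqx] at this
  have hne : (𝓝[Ioc q x] q).NeBot := by
    refine mem_closure_iff_nhdsWithin_neBot.mp ?_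
    rw [closure_Ioc hlt.ne]
    exact left_mem_Icc.mpr hqx
  have htend : Tendsto (fun u => |∫ s in u..x, F s * Real.cos (g s)|) (𝓝[Ioc q x] q)
      (𝓝 |∫ s in q..x, F s * Real.cos (g s)|) :=
    (((hPc q (left_mem_Icc.mpr hqx)).mono Ioc_subset_Icc_self)).abs
  refine le_of_tendsto htend ?_
  filter_upwards [self_mem_nhdsWithin] with u hu
  have husub : uIcc u x ⊆ uIcc q x :=
    uIcc_subset_uIcc (by rw [uIcc_of_le hqx]; exact ⟨hu.1.le, hu.2⟩) right_mem_uIcc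
  have hcore := osc_core a M Fmax u x g g' g'' F F' ha hFmax hu.2 hg hg' hga hgM hF
    (fun s hs => hFd s ⟨lt_of_lt_of_le hu.1 hs.1, hs.2⟩)
    (hFi.mono_set husub) (hF'i.mono_set husub)
  refine hcore.trans ?_
  have h1 : (∫ s in u..x, |F' s|) ≤ ∫ s in q..x, |F' s| :=
    integral_mono_interval hu.1.le hu.2 le_rfl
      (Eventually.of_forall fun s => abs_nonneg _) hF'i.abs
  have h2 : (∫ s in u..x, |F s|) ≤ ∫ s in q..x, |F s| :=
    integral_mono_interval hu.1.le hu.2 le_rfl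
      (Eventually.of_forall fun s => abs_nonneg _) hFi.abs
  gcongr


/-- Non-stationary phase bound with a universal constant, for an amplitude `F`
which is piecewise `C¹` with at most one jump (at `p`), and a phase
`ψ - θ₁ - θ₂` whose derivative has absolute value at least `a` and constant
sign, with second derivatives bounded by `K`. -/
theorem oscillatory_integral_piecewise_bound :
    ∃ C : ℝ, 0 < C ∧
      ∀ (a K Fmax p y x : ℝ)
        (θ₁ θ₁' θ₁'' θ₂ θ₂' θ₂'' ψ ψ' ψ'' F F' : ℝ → ℝ),
        0 < a → 0 < K → 0 ≤ Fmax → 0 ≤ y → y ≤ x →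
        (∀ s, HasDerivAt θ₁ (θ₁' s) s) → (∀ s, HasDerivAt θ₁' (θ₁'' s) s) →
        (∀ s, HasDerivAt θ₂ (θ₂' s) s) → (∀ s, HasDerivAt θ₂' (θ₂'' s) s) →
        (∀ s, HasDerivAt ψ (ψ' s) s) → (∀ s, HasDerivAt ψ' (ψ'' s) s) →
        (∀ s, |θ₁'' s| ≤ K) → (∀ s, |θ₂'' s| ≤ K) → (∀ s, |ψ'' s| ≤ K) →
        (∀ s, a ≤ |ψ' s - θ₁' s - θ₂' s|) →
        ((∀ s, 0 < ψ' s - θ₁' s - θ₂' s) ∨ (∀ s, ψ' s - θ₁' s - θ₂' s < 0)) →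
        (∀ s, |F s| ≤ Fmax) →
        (∀ s, s ≠ p → HasDerivAt F (F' s) s) →
        ContinuousOn F {s | s ≠ p} → ContinuousOn F' {s | s ≠ p} →
        IntervalIntegrable F volume y x → IntervalIntegrable F' volume y x →
        |∫ s in y..x, F s * Real.cos (ψ s - θ₁ s - θ₂ s)| ≤
          (C / a) * (Fmax + (∫ s in y..x, |F' s|)
            + (K / a) * ∫ s in y..x, |F s|) := by
  refine ⟨4, by norm_num, ?_⟩
  intro a K Fmax p y x θ₁ θ₁' θ₁'' θ₂ θ₂' θ₂'' ψ ψ' ψ'' F F'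
    ha hK hFmax hy hyx hθ₁ hθ₁' hθ₂ hθ₂' hψ hψ' hθ₁'' hθ₂'' hψ'' hga _hsign hFb hFd _hFc _hF'c
    hFi hF'i
  set g : ℝ → ℝ := fun s => ψ s - θ₁ s - θ₂ s with hgdef
  set g' : ℝ → ℝ := fun s => ψ' s - θ₁' s - θ₂' s with hg'def
  set g'' : ℝ → ℝ := fun s => ψ'' s - θ₁'' s - θ₂'' s with hg''def
  have hg : ∀ s, HasDerivAt g (g' s) s := fun s => ((hψ s).sub (hθ₁ s)).sub (hθ₂ s)
  have hg' : ∀ s, HasDerivAt g' (g'' s) s := fun s => ((hψ' s).sub (hθ₁' s)).sub (hθ₂' s)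
  have hgM : ∀ s, |g'' s| ≤ 3 * K := by
    intro s
    have h1 := abs_le.mp (hψ'' s)
    have h2 := abs_le.mp (hθ₁'' s)
    have h3 := abs_le.mp (hθ₂'' s)
    rw [abs_le]
    constructor <;> simp only [hg''def] <;> linarith
  set q : ℝ := max y (min p x) with hqdef
  have hq1 : y ≤ q := le_max_left _ _
  have hq2 : q ≤ x := max_le hyx (min_le_right p x)
  have hsubL : uIcc y q ⊆ uIcc y x :=
    uIcc_subset_uIcc left_mem_uIcc (by rw [uIcc_of_le hyx]; exact ⟨hq1, hq2⟩)
  have hsubR : uIcc q x ⊆ uIcc y x :=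
    uIcc_subset_uIcc (by rw [uIcc_of_le hyx]; exact ⟨hq1, hq2⟩) right_mem_uIcc
  have hdL : ∀ s ∈ Ico y q, HasDerivAt F (F' s) s := by
    intro s hs
    refine hFd s ?_
    rintro rfl
    rcases lt_max_iff.mp hs.2 with h | h
    · exact absurd hs.1 (not_le.mpr h)
    · exact absurd (min_le_left s x) (not_le.mpr h)
  have hdR : ∀ s ∈ Ioc q x, HasDerivAt F (F' s) s := by
    intro s hs
    refine hFd s ?_
    rintro rfl
    have hmin : min s x < s := lt_of_le_of_lt (le_max_right y _) hs.1
    rcases min_lt_iff.mp hmin with h | h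
    · exact lt_irrefl _ h
    · exact absurd hs.2 (not_le.mpr h)
  have hL := osc_left a (3 * K) Fmax y q g g' g'' F F' ha hFmax hq1 hg hg' hga hgM hFb hdL
    (hFi.mono_set hsubL) (hF'i.mono_set hsubL)
  have hR := osc_right a (3 * K) Fmax q x g g' g'' F F' ha hFmax hq2 hg hg' hga hgM hFb hdR
    (hFi.mono_set hsubR) (hF'i.mono_set hsubR)
  have hgc : Continuous g := by
    rw [continuous_iff_continuousAt]; exact fun s => (hg s).continuousAt
  have hcosc : Continuous fun s => Real.cos (g s) := Real.continuous_cos.comp hgc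
  have hFcos : IntervalIntegrable (fun s => F s * Real.cos (g s)) volume y x :=
    hFi.mul_continuousOn hcosc.continuousOn
  have hsplit : (∫ s in y..q, F s * Real.cos (g s)) + (∫ s in q..x, F s * Real.cos (g s)) =
      ∫ s in y..x, F s * Real.cos (g s) :=
    integral_add_adjacent_intervals (hFcos.mono_set hsubL) (hFcos.mono_set hsubR)
  have hsplitF' : (∫ s in y..q, |F' s|) + (∫ s in q..x, |F' s|) = ∫ s in y..x, |F' s| :=
    integral_add_adjacent_intervals ((hF'i.mono_set hsubL).abs) ((hF'i.mono_set hsubR).abs)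
  have hsplitF : (∫ s in y..q, |F s|) + (∫ s in q..x, |F s|) = ∫ s in y..x, |F s| :=
    integral_add_adjacent_intervals ((hFi.mono_set hsubL).abs) ((hFi.mono_set hsubR).abs)
  have hA : (0:ℝ) ≤ ∫ s in y..x, |F' s| :=
    intervalIntegral.integral_nonneg hyx (fun s _ => abs_nonneg _)
  have hB : (0:ℝ) ≤ ∫ s in y..x, |F s| :=
    intervalIntegral.integral_nonneg hyx (fun s _ => abs_nonneg _)
  have htri : |∫ s in y..x, F s * Real.cos (g s)| ≤
      |∫ s in y..q, F s * Real.cos (g s)| + |∫ s in q..x, F s * Real.cos (g s)| := by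
    rw [← hsplit]; exact abs_add_le _ _
  have hmain : |∫ s in y..x, F s * Real.cos (g s)| ≤
      (1 / a) * (4 * Fmax + (∫ s in y..x, |F' s|) + (3 * K / a) * ∫ s in y..x, |F s|) := by
    refine htri.trans ((add_le_add hL hR).trans ?_)
    rw [← hsplitF', ← hsplitF]
    ring_nf
    linarith
  refine hmain.trans ?_
  have hu : (0:ℝ) < 1 / a := by positivity
  rw [div_eq_mul_one_div (4:ℝ) a, div_eq_mul_one_div K a, div_eq_mul_one_div (3 * K) a] at *
  set u := 1 / a
  set A := ∫ s in y..x, |F' s|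
  set B := ∫ s in y..x, |F s|
  nlinarith [mul_nonneg hu.le hA, mul_nonneg (mul_nonneg hK.le (mul_nonneg hu.le hu.le)) hB,
    mul_nonneg hu.le hFmax]
end
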